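/- arXiv:2109.14291 — 6 statements merged into one kernel-verified Lean document; each statement's English description precedes it below -/
import Mathlib

section
/- If Φ̄ < σ̃, where Φ̄ = (1/T)∫₀ᵀ Φ(t)dt, then every positive solution ρ of ρ' = μρ[Φ(t)·tanh(ρ)/ρ − σ̃] satisfies ρ(t) → 0 as t → ∞; in fact ρ(t + nT) ≤ ρ(0)·e^{μTΦ̄}·e^{μnT(Φ̄ − σ̃)} for all t ∈ [0,T] and integers n ≥ 0. -/
open Filter

lemma tanh_le_self_aux {x : ℝ} (hx : 0 ≤ x) : Real.tanh x ≤ x := by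
  have key : ∀ y : ℝ, 0 ≤ y → Real.sinh y ≤ y * Real.cosh y := by
    intro y hy
    have hderiv : ∀ z : ℝ, HasDerivAt (fun z : ℝ => z * Real.cosh z - Real.sinh z)
        (z * Real.sinh z) z := by
      intro z
      have h1 := ((hasDerivAt_id z).mul (Real.hasDerivAt_cosh z)).sub (Real.hasDerivAt_sinh z)
      refine HasDerivAt.congr_deriv h1 ?_
      simp only [id_eq]
      ring
    have hmono : MonotoneOn (fun z : ℝ => z * Real.cosh z - Real.sinh z) (Set.Ici (0:ℝ)) := by
      apply monotoneOn_of_deriv_nonneg (convex_Ici 0)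
      · exact ((continuous_id.mul Real.continuous_cosh).sub Real.continuous_sinh).continuousOn
      · intro z _; exact (hderiv z).differentiableAt.differentiableWithinAt
      · intro z hz
        rw [(hderiv z).deriv]
        rw [interior_Ici] at hz
        exact mul_nonneg (le_of_lt hz) (by simpa using Real.sinh_le_sinh.mpr (le_of_lt hz))
    have h0 := hmono Set.self_mem_Ici (Set.mem_Ici.mpr hy) hy
    simp only [Real.cosh_zero, Real.sinh_zero, mul_one, zero_mul, sub_zero, zero_sub,
      neg_nonpos] at h0
    linarith [h0]
  have hc := Real.cosh_pos (x := x)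
  rw [Real.tanh_eq_sinh_div_cosh, div_le_iff₀ hc]
  exact key x hx

theorem zero_stable_of_mean_lt (μ σt T : ℝ)
    (hμ : 0 < μ) (hσt : 0 < σt) (hT : 0 < T)
    (Φ : ℝ → ℝ) (hΦc : Continuous Φ) (hΦpos : ∀ t, 0 < Φ t)
    (hΦper : Function.Periodic Φ T)
    (hmean : (1 / T) * ∫ t in (0:ℝ)..T, Φ t < σt)
    (ρ : ℝ → ℝ) (hρpos : ∀ t, 0 ≤ t → 0 < ρ t)
    (hode : ∀ t, 0 ≤ t →
      HasDerivAt ρ (μ * ρ t * (Φ t * (Real.tanh (ρ t) / ρ t) - σt)) t) :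
    Tendsto ρ atTop (nhds 0) ∧
    ∀ t ∈ Set.Icc (0:ℝ) T, ∀ n : ℕ,
      ρ (t + n * T) ≤
        ρ 0 * Real.exp (μ * T * ((1 / T) * ∫ s in (0:ℝ)..T, Φ s)) *
          Real.exp (μ * n * T * ((1 / T) * (∫ s in (0:ℝ)..T, Φ s) - σt)) := by
  have hTne : T ≠ 0 := ne_of_gt hT
  set I : ℝ := ∫ s in (0:ℝ)..T, Φ s with hIdef
  have hΦint : ∀ a b : ℝ, IntervalIntegrable Φ MeasureTheory.volume a b :=
    fun a b => hΦc.intervalIntegrable a b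
  -- the primitive F
  set ψ : ℝ → ℝ := fun s => μ * (Φ s - σt) with hψdef
  have hψc : Continuous ψ := continuous_const.mul (hΦc.sub continuous_const)
  set F : ℝ → ℝ := fun t => ∫ s in (0:ℝ)..t, ψ s with hFdef
  have hFderiv : ∀ x : ℝ, HasDerivAt F (ψ x) x := by
    intro x
    exact intervalIntegral.integral_hasDerivAt_right (hψc.intervalIntegrable 0 x)
      hψc.stronglyMeasurable.stronglyMeasurableAtFilter hψc.continuousAt
  -- key comparison : ρ t ≤ ρ 0 * exp (F t) for t ≥ 0
  have hkey : ∀ t : ℝ, 0 ≤ t → ρ t ≤ ρ 0 * Real.exp (F t) := by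
    intro t ht
    set g : ℝ → ℝ := fun s => Real.log (ρ s) - F s with hgdef
    have hgderiv : ∀ s, 0 ≤ s → HasDerivAt g
        ((ρ s)⁻¹ * (μ * ρ s * (Φ s * (Real.tanh (ρ s) / ρ s) - σt)) - ψ s) s := by
      intro s hs
      exact ((Real.hasDerivAt_log (ne_of_gt (hρpos s hs))).comp s (hode s hs)).sub (hFderiv s)
    have hanti : AntitoneOn g (Set.Ici (0:ℝ)) := by
      apply antitoneOn_of_deriv_nonpos (convex_Ici 0)
      · intro s hs
        exact ((hgderiv s hs).continuousAt).continuousWithinAt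
      · intro s hs
        rw [interior_Ici] at hs
        exact (hgderiv s (le_of_lt hs)).differentiableAt.differentiableWithinAt
      · intro s hs
        rw [interior_Ici] at hs
        have hs' : (0:ℝ) ≤ s := le_of_lt hs
        rw [(hgderiv s hs').deriv]
        have hρs := hρpos s hs'
        have hsimp : (ρ s)⁻¹ * (μ * ρ s * (Φ s * (Real.tanh (ρ s) / ρ s) - σt)) - ψ s
            = μ * Φ s * (Real.tanh (ρ s) / ρ s - 1) := by
          field_simp [hψdef]
          ring
        rw [hsimp]
        have htanh : Real.tanh (ρ s) / ρ s ≤ 1 := by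
          rw [div_le_one hρs]
          exact tanh_le_self_aux hρs.le
        have := mul_nonneg (mul_nonneg hμ.le (hΦpos s).le) (sub_nonneg.mpr htanh)
        nlinarith [this]
    have hg := hanti Set.self_mem_Ici (Set.mem_Ici.mpr ht) ht
    have hF0 : F 0 = 0 := by simp [hFdef]
    have hlog : Real.log (ρ t) ≤ Real.log (ρ 0) + F t := by
      simp only [hgdef, hF0, sub_zero] at hg
      linarith
    calc ρ t = Real.exp (Real.log (ρ t)) := (Real.exp_log (hρpos t ht)).symm
      _ ≤ Real.exp (Real.log (ρ 0) + F t) := Real.exp_le_exp.mpr hlog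
      _ = ρ 0 * Real.exp (F t) := by rw [Real.exp_add, Real.exp_log (hρpos 0 le_rfl)]
  -- F as explicit integral of Φ
  have hFeq : ∀ t : ℝ, F t = μ * (∫ s in (0:ℝ)..t, Φ s) - μ * σt * t := by
    intro t
    simp only [hFdef, hψdef]
    rw [intervalIntegral.integral_const_mul, intervalIntegral.integral_sub (hΦint 0 t)
      (intervalIntegrable_const)]
    simp [mul_sub]
    ring
  have hIlt : I < σt * T := by
    have := (div_lt_iff₀ hT).mp (by rw [div_eq_inv_mul, ← one_div]; exact hmean)
    linarith
  -- Part 2 : the explicit bound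
  have part2 : ∀ t ∈ Set.Icc (0:ℝ) T, ∀ n : ℕ,
      ρ (t + n * T) ≤
        ρ 0 * Real.exp (μ * T * ((1 / T) * I)) *
          Real.exp (μ * n * T * ((1 / T) * I - σt)) := by
    intro t ht n
    obtain ⟨ht0, htT⟩ := ht
    have hnT : (0:ℝ) ≤ n * T := mul_nonneg (Nat.cast_nonneg n) hT.le
    have harg : (0:ℝ) ≤ t + n * T := by linarith
    have hsplit : (∫ s in (0:ℝ)..(t + n * T), Φ s)
        = (∫ s in (0:ℝ)..t, Φ s) + n * I := by
      have h1 : (∫ s in (0:ℝ)..(t + n * T), Φ s)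
          = (∫ s in (0:ℝ)..t, Φ s) + ∫ s in t..(t + n * T), Φ s :=
        (intervalIntegral.integral_add_adjacent_intervals (hΦint 0 t) (hΦint t _)).symm
      have h2 : (∫ s in t..(t + (n:ℤ) • T), Φ s) = (n:ℤ) • ∫ s in t..(t + T), Φ s :=
        hΦper.intervalIntegral_add_zsmul_eq (n : ℤ) t hΦint
      have h3 : (∫ s in t..(t + T), Φ s) = I := by
        rw [hΦper.intervalIntegral_add_eq t 0, zero_add]
      rw [h1]
      have : t + (n:ℤ) • T = t + n * T := by
        simp only [zsmul_eq_mul, Int.cast_natCast]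
      rw [← this, h2, h3]
      simp only [zsmul_eq_mul, Int.cast_natCast]
    have hmono_int : (∫ s in (0:ℝ)..t, Φ s) ≤ I := by
      apply intervalIntegral.integral_mono_interval le_rfl ht0 htT
      · filter_upwards with s using (hΦpos s).le
      · exact hΦint 0 T
    have hFbound : F (t + n * T) ≤ μ * I + μ * n * I - μ * σt * (n * T) := by
      rw [hFeq, hsplit]
      have h4 : μ * σt * t ≥ 0 := by positivity
      nlinarith [mul_le_mul_of_nonneg_left hmono_int hμ.le]
    calc ρ (t + n * T) ≤ ρ 0 * Real.exp (F (t + n * T)) := hkey _ harg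
      _ ≤ ρ 0 * Real.exp (μ * I + μ * n * I - μ * σt * (n * T)) := by
          exact mul_le_mul_of_nonneg_left (Real.exp_le_exp.mpr hFbound) (hρpos 0 le_rfl).le
      _ = ρ 0 * Real.exp (μ * T * ((1 / T) * I)) *
            Real.exp (μ * n * T * ((1 / T) * I - σt)) := by
          rw [mul_assoc (ρ 0), ← Real.exp_add]
          congr 1
          field_simp
          ring
  refine ⟨?_, part2⟩
  -- Part 1 : tendsto
  -- bounded "periodic part" H
  set H : ℝ → ℝ := fun s => (∫ u in (0:ℝ)..s, Φ u) - s * (I / T) with hHdef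
  have hHper : Function.Periodic H T := by
    intro s
    simp only [hHdef]
    have h1 : (∫ u in (0:ℝ)..(s + T), Φ u) = (∫ u in (0:ℝ)..s, Φ u) + I := by
      have := (intervalIntegral.integral_add_adjacent_intervals (hΦint 0 s) (hΦint s (s+T))).symm
      rw [this, hΦper.intervalIntegral_add_eq s 0, zero_add]
    rw [h1]
    field_simp
    ring
  have hHcont : Continuous H := by
    have : Continuous fun s => (∫ u in (0:ℝ)..s, Φ u) :=
      continuous_iff_continuousAt.mpr fun x =>
        (intervalIntegral.integral_hasDerivAt_right (hΦint 0 x)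
          hΦc.stronglyMeasurable.stronglyMeasurableAtFilter hΦc.continuousAt).continuousAt
    exact this.sub (continuous_id.mul continuous_const)
  obtain ⟨C, hC⟩ : ∃ C, ∀ s, H s ≤ C := by
    obtain ⟨C, hC⟩ := (hHper.compact_of_continuous hTne hHcont).bddAbove
    exact ⟨C, fun s => hC (Set.mem_range_self s)⟩
  have hFlin : ∀ s : ℝ, F s ≤ μ * C + μ * (I / T - σt) * s := by
    intro s
    rw [hFeq]
    have h1 : (∫ u in (0:ℝ)..s, Φ u) = H s + s * (I / T) := by simp [hHdef]
    rw [h1, show μ * (H s + s * (I / T)) - μ * σt * s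
        = μ * H s + μ * (I / T - σt) * s from by ring]
    exact add_le_add_left (mul_le_mul_of_nonneg_left (hC s) hμ.le) _
  have hcoef : μ * (I / T - σt) < 0 := by
    apply mul_neg_of_pos_of_neg hμ
    rw [sub_neg, div_lt_iff₀ hT]
    linarith
  have hlin_bot : Tendsto (fun s : ℝ => μ * C + μ * (I / T - σt) * s) atTop atBot := by
    apply tendsto_atBot_add_const_left
    exact (tendsto_const_mul_atBot_of_neg hcoef).mpr tendsto_id
  have hFbot : Tendsto F atTop atBot := tendsto_atBot_mono hFlin hlin_bot
  have hexp0 : Tendsto (fun s => ρ 0 * Real.exp (F s)) atTop (nhds 0) := by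
    have := (Real.tendsto_exp_atBot.comp hFbot).const_mul (ρ 0)
    simpa using this
  apply squeeze_zero' (g := fun s => ρ 0 * Real.exp (F s))
  · filter_upwards [eventually_ge_atTop (0:ℝ)] with s hs
    exact (hρpos s hs).le
  · filter_upwards [eventually_ge_atTop (0:ℝ)] with s hs
    exact hkey s hs
  · exact hexp0
end

section
/- If σ̃ = Φ̄ and a positive solution ρ of ρ' = μρ[Φ(t)·tanh(ρ)/ρ − σ̃] satisfies liminf_{t→∞} ρ(t) = α > 0, then a contradiction follows; hence liminf_{t→∞} ρ(t) = 0. -/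
open Filter

private lemma tanh_lt_self' {x : ℝ} (hx : 0 < x) : Real.tanh x < x := by
  have key : ∀ y : ℝ, HasDerivAt (fun z => z * Real.cosh z - Real.sinh z)
      (y * Real.sinh y) y := by
    intro y
    have h1 : HasDerivAt (fun z : ℝ => z * Real.cosh z)
        (1 * Real.cosh y + y * Real.sinh y) y :=
      (hasDerivAt_id y).mul (Real.hasDerivAt_cosh y)
    have h2 := h1.sub (Real.hasDerivAt_sinh y)
    exact h2.congr_deriv (by ring)
  have hmono : StrictMonoOn (fun z => z * Real.cosh z - Real.sinh z) (Set.Ici (0:ℝ)) := by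
    apply strictMonoOn_of_deriv_pos (convex_Ici 0)
    · exact ((continuous_id.mul Real.continuous_cosh).sub Real.continuous_sinh).continuousOn
    · intro y hy
      rw [interior_Ici, Set.mem_Ioi] at hy
      rw [(key y).deriv]
      exact mul_pos hy (Real.sinh_pos_iff.2 hy)
  have h0 := hmono Set.self_mem_Ici (Set.mem_Ici.2 hx.le) hx
  simp only [Real.cosh_zero, Real.sinh_zero, mul_one, zero_mul, sub_zero] at h0
  rw [Real.tanh_eq_sinh_div_cosh, div_lt_iff₀ (Real.cosh_pos x)]
  linarith

private lemma antitoneOn_Ici_of_deriv' {f f' : ℝ → ℝ} {a : ℝ}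
    (hd : ∀ t ∈ Set.Ici a, HasDerivAt f (f' t) t)
    (h0 : ∀ t ∈ Set.Ici a, f' t ≤ 0) : AntitoneOn f (Set.Ici a) := by
  apply antitoneOn_of_deriv_nonpos (convex_Ici a)
  · exact fun t ht => (hd t ht).continuousAt.continuousWithinAt
  · intro t ht
    rw [interior_Ici, Set.mem_Ioi] at ht
    exact (hd t ht.le).differentiableAt.differentiableWithinAt
  · intro t ht
    rw [interior_Ici, Set.mem_Ioi] at ht
    rw [(hd t ht.le).deriv]
    exact h0 t ht.le

theorem liminf_zero_of_critical_mean (μ T : ℝ)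
    (hμ : 0 < μ) (hT : 0 < T)
    (Φ : ℝ → ℝ) (hΦc : Continuous Φ) (hΦpos : ∀ t, 0 < Φ t)
    (hΦper : Function.Periodic Φ T)
    (σt : ℝ) (hcrit : σt = (1 / T) * ∫ t in (0:ℝ)..T, Φ t)
    (ρ : ℝ → ℝ) (hρpos : ∀ t, 0 ≤ t → 0 < ρ t)
    (hode : ∀ t, 0 ≤ t →
      HasDerivAt ρ (μ * ρ t * (Φ t * (Real.tanh (ρ t) / ρ t) - σt)) t) :
    Filter.liminf ρ Filter.atTop = 0 := by
  have hΦint : ∀ a b : ℝ, IntervalIntegrable Φ MeasureTheory.volume a b :=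
    fun a b => hΦc.intervalIntegrable a b
  set F : ℝ → ℝ := fun t => ∫ s in (0:ℝ)..t, Φ s with hFdef
  set G : ℝ → ℝ := fun t => F t - σt * t with hGdef
  have hF : ∀ b : ℝ, HasDerivAt F (Φ b) b := fun b =>
    (hΦc.integral_hasStrictDerivAt 0 b).hasDerivAt
  have hG : ∀ b : ℝ, HasDerivAt G (Φ b - σt) b := by
    intro b
    have h2 : HasDerivAt (fun t : ℝ => σt * t) σt b := by
      simpa using (hasDerivAt_id b).const_mul σt
    exact (hF b).sub h2
  have hGcont : Continuous G := by
    rw [continuous_iff_continuousAt]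
    exact fun b => (hG b).continuousAt
  have hσT : σt * T = ∫ s in (0:ℝ)..T, Φ s := by
    rw [hcrit]; field_simp
  have hGper : Function.Periodic G T := by
    intro t
    have hadd : (∫ s in (0:ℝ)..(t+T), Φ s)
        = (∫ s in (0:ℝ)..t, Φ s) + ∫ s in t..(t+T), Φ s :=
      (intervalIntegral.integral_add_adjacent_intervals (hΦint 0 t) (hΦint t (t+T))).symm
    have hper : (∫ s in t..(t+T), Φ s) = ∫ s in (0:ℝ)..(0+T), Φ s :=
      hΦper.intervalIntegral_add_eq t 0
    rw [zero_add] at hper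
    simp only [hGdef, hFdef]
    rw [hadd, hper]
    have := hσT
    ring_nf
    ring_nf at this ⊢
    linarith
  -- bound B on |G|
  obtain ⟨xB, hxB, hxBmax⟩ := isCompact_Icc.exists_isMaxOn (Set.nonempty_Icc.2 hT.le)
    ((hGcont.abs).continuousOn (s := Set.Icc 0 T))
  set B := |G xB| with hBdef
  have hGbound : ∀ t : ℝ, |G t| ≤ B := by
    intro t
    obtain ⟨y, hy, hyeq⟩ := hGper.exists_mem_Ico₀ hT t
    rw [hyeq]
    exact (isMaxOn_iff.mp hxBmax) y ⟨hy.1, hy.2.le⟩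
  -- min m of Φ
  obtain ⟨xm, hxm, hxmmin⟩ := isCompact_Icc.exists_isMinOn (Set.nonempty_Icc.2 hT.le)
    (hΦc.continuousOn (s := Set.Icc 0 T))
  set m := Φ xm with hmdef
  have hm : 0 < m := hΦpos xm
  have hΦm : ∀ t : ℝ, m ≤ Φ t := by
    intro t
    obtain ⟨y, hy, hyeq⟩ := hΦper.exists_mem_Ico₀ hT t
    rw [hyeq]
    exact (isMinOn_iff.mp hxmmin) y ⟨hy.1, hy.2.le⟩
  -- derivative of log ρ
  have hlog : ∀ t, 0 ≤ t → HasDerivAt (fun s => Real.log (ρ s))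
      (μ * (Φ t * (Real.tanh (ρ t) / ρ t) - σt)) t := by
    intro t ht
    have hne := (hρpos t ht).ne'
    have h := (hode t ht).log hne
    convert h using 1
    field_simp
  have htanh_le : ∀ x : ℝ, 0 < x → Real.tanh x / x ≤ 1 := fun x hx =>
    le_of_lt ((div_lt_one hx).2 (tanh_lt_self' hx))
  -- global upper bound on ρ
  set L := Real.log (ρ 0) + μ * B with hLdef
  have hG0 : G 0 = 0 := by
    simp [hGdef, hFdef, intervalIntegral.integral_same]
  have hρlog_le : ∀ t : ℝ, 0 ≤ t → Real.log (ρ t) ≤ L := by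
    intro t ht
    have hanti : AntitoneOn (fun s => Real.log (ρ s) - μ * G s) (Set.Ici 0) := by
      apply antitoneOn_Ici_of_deriv'
        (f' := fun s => μ * (Φ s * (Real.tanh (ρ s) / ρ s) - σt) - μ * (Φ s - σt))
      · exact fun s hs => (hlog s hs).sub ((hG s).const_mul μ)
      · intro s hs
        have h1 : Real.tanh (ρ s) / ρ s ≤ 1 := htanh_le _ (hρpos s hs)
        have h2 : Φ s * (Real.tanh (ρ s) / ρ s) ≤ Φ s * 1 :=
          mul_le_mul_of_nonneg_left h1 (hΦpos s).le
        have h3 : μ * (Φ s * (Real.tanh (ρ s) / ρ s)) ≤ μ * (Φ s * 1) :=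
          mul_le_mul_of_nonneg_left h2 hμ.le
        nlinarith
    have h4 := hanti Set.self_mem_Ici (Set.mem_Ici.2 ht) ht
    have h5 : G t ≤ B := le_trans (le_abs_self _) (hGbound t)
    have h6 : μ * G t ≤ μ * B := mul_le_mul_of_nonneg_left h5 hμ.le
    simp only at h4
    rw [hG0] at h4
    simp only [hLdef]
    linarith
  set C := Real.exp L with hCdef
  have hρle : ∀ t, 0 ≤ t → ρ t ≤ C := by
    intro t ht
    calc ρ t = Real.exp (Real.log (ρ t)) := (Real.exp_log (hρpos t ht)).symm
    _ ≤ C := Real.exp_le_exp.2 (hρlog_le t ht)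
  -- key contradiction lemma
  have key : ∀ b : ℝ, 0 < b → ∀ t₀ : ℝ, 0 ≤ t₀ → (∀ t, t₀ ≤ t → b ≤ ρ t) → False := by
    intro b hb t₀ ht₀ hge
    have hbC : b ≤ C := le_trans (hge t₀ le_rfl) (hρle t₀ ht₀)
    have htanhc : Continuous Real.tanh := by
      have : Real.tanh = fun x => Real.sinh x / Real.cosh x :=
        funext fun x => Real.tanh_eq_sinh_div_cosh x
      rw [this]
      exact Real.continuous_sinh.div Real.continuous_cosh fun x => (Real.cosh_pos x).ne'
    obtain ⟨x₀, hx₀, hx₀max⟩ := isCompact_Icc.exists_isMaxOn (Set.nonempty_Icc.2 hbC)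
      ((htanhc.continuousOn).div continuousOn_id
        (fun x hx => (lt_of_lt_of_le hb hx.1).ne'))
    set θ := Real.tanh x₀ / x₀ with hθdef
    have hx₀pos : 0 < x₀ := lt_of_lt_of_le hb hx₀.1
    have hθ1 : θ < 1 := (div_lt_one hx₀pos).2 (tanh_lt_self' hx₀pos)
    have hρmem : ∀ t, t₀ ≤ t → Real.tanh (ρ t) / ρ t ≤ θ := by
      intro t htt
      exact (isMaxOn_iff.mp hx₀max) (ρ t) ⟨hge t htt, hρle t (le_trans ht₀ htt)⟩
    set c := μ * ((1 - θ) * m) with hcdef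
    have hc : 0 < c := mul_pos hμ (mul_pos (by linarith) hm)
    have hanti : AntitoneOn (fun s => Real.log (ρ s) - μ * G s + c * s) (Set.Ici t₀) := by
      apply antitoneOn_Ici_of_deriv'
        (f' := fun s => μ * (Φ s * (Real.tanh (ρ s) / ρ s) - σt) - μ * (Φ s - σt) + c)
      · intro s hs
        have h1 := (hlog s (le_trans ht₀ hs)).sub ((hG s).const_mul μ)
        have h2 : HasDerivAt (fun x : ℝ => c * x) c s := by
          simpa using (hasDerivAt_id s).const_mul c
        exact h1.add h2
      · intro s hs
        have h1 : Real.tanh (ρ s) / ρ s ≤ θ := hρmem s hs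
        have h2 : m ≤ Φ s := hΦm s
        have h3 : 0 < Φ s := hΦpos s
        have h4 : Φ s * (Real.tanh (ρ s) / ρ s) ≤ Φ s * θ :=
          mul_le_mul_of_nonneg_left h1 h3.le
        have h5 : μ * (Φ s * (Real.tanh (ρ s) / ρ s)) ≤ μ * (Φ s * θ) :=
          mul_le_mul_of_nonneg_left h4 hμ.le
        have h6 : μ * ((1 - θ) * m) ≤ μ * ((1 - θ) * Φ s) :=
          mul_le_mul_of_nonneg_left
            (mul_le_mul_of_nonneg_left h2 (by linarith)) hμ.le
        simp only [hcdef]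
        nlinarith
    set A := Real.log (ρ t₀) - μ * G t₀ + c * t₀ + μ * B with hAdef
    have hdecay : ∀ t, t₀ ≤ t → Real.log (ρ t) ≤ A - c * t := by
      intro t htt
      have h4 := hanti Set.self_mem_Ici (Set.mem_Ici.2 htt) htt
      simp only at h4
      have h5 : G t ≤ B := le_trans (le_abs_self _) (hGbound t)
      have h6 : μ * G t ≤ μ * B := mul_le_mul_of_nonneg_left h5 hμ.le
      simp only [hAdef]
      linarith
    set t₁ := max t₀ ((A - Real.log b + 1) / c) with ht₁def
    have ht₁ : t₀ ≤ t₁ := le_max_left _ _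
    have hct₁ : A - Real.log b + 1 ≤ c * t₁ := by
      have h7 : (A - Real.log b + 1) / c ≤ t₁ := le_max_right _ _
      calc A - Real.log b + 1 = c * ((A - Real.log b + 1) / c) := by
            field_simp
      _ ≤ c * t₁ := mul_le_mul_of_nonneg_left h7 hc.le
    have h8 : Real.log (ρ t₁) < Real.log b := by
      have := hdecay t₁ ht₁
      linarith
    have h9 : ρ t₁ < b := (Real.log_lt_log_iff (hρpos t₁ (le_trans ht₀ ht₁)) hb).1 h8
    exact absurd (hge t₁ ht₁) (not_le.2 h9)
  -- conclude
  have hev0 : ∀ᶠ t in atTop, (0:ℝ) ≤ ρ t :=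
    eventually_atTop.2 ⟨0, fun t ht => (hρpos t ht).le⟩
  have hevC : ∀ᶠ t in atTop, ρ t ≤ C :=
    eventually_atTop.2 ⟨0, fun t ht => hρle t ht⟩
  have hbdd : IsBoundedUnder (· ≥ ·) atTop ρ := isBoundedUnder_of_eventually_ge hev0
  have hcob : IsCoboundedUnder (· ≥ ·) atTop ρ :=
    (isBoundedUnder_of_eventually_le hevC).isCoboundedUnder_ge
  have h1 : liminf ρ atTop ≤ 0 := by
    apply liminf_le_of_le hbdd
    intro b hb
    by_contra hb0
    push_neg at hb0
    obtain ⟨a, ha⟩ := eventually_atTop.1 hb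
    exact key b hb0 (max a 0) (le_max_right a 0)
      (fun t htt => ha t (le_trans (le_max_left a 0) htt))
  have h2 : (0:ℝ) ≤ liminf ρ atTop := le_liminf_of_le hcob hev0
  linarith
end

section
/- If every positive solution of ρ' = μρ[Φ(t)·tanh(ρ)/ρ − σ̃] tends to 0 as t → ∞, then σ̃ ≥ Φ̄. Equivalently, if Φ̄ > σ̃, then no positive solution tends to 0. -/
open Filter

/-- `tanh` has derivative `1` at `0`. -/
lemma hasDerivAt_tanh_zero : HasDerivAt Real.tanh 1 0 := by
  have h : HasDerivAt (fun x => Real.sinh x / Real.cosh x)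
      ((Real.cosh 0 * Real.cosh 0 - Real.sinh 0 * Real.sinh 0) / Real.cosh 0 ^ 2) 0 :=
    (Real.hasDerivAt_sinh 0).div (Real.hasDerivAt_cosh 0) (Real.cosh_pos 0).ne'
  have : Real.tanh = fun x => Real.sinh x / Real.cosh x := by
    funext x; exact Real.tanh_eq_sinh_div_cosh x
  rw [this]
  convert h using 1
  simp

/-- `tanh x / x → 1` as `x → 0` within punctured neighborhoods. -/
lemma tendsto_tanh_div : Tendsto (fun x => Real.tanh x / x) (nhdsWithin 0 {(0:ℝ)}ᶜ) (nhds 1) := by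
  have h := hasDerivAt_iff_tendsto_slope.mp hasDerivAt_tanh_zero
  have : slope Real.tanh 0 = fun x => Real.tanh x / x := by
    funext x
    simp [slope_def_field, div_eq_inv_mul]
  rwa [this] at h

theorem no_extinction_of_mean_gt (μ σt T : ℝ)
    (hμ : 0 < μ) (hσt : 0 < σt) (hT : 0 < T)
    (Φ : ℝ → ℝ) (hΦc : Continuous Φ) (hΦpos : ∀ t, 0 < Φ t)
    (hΦper : Function.Periodic Φ T)
    (hmean : σt < (1 / T) * ∫ t in (0:ℝ)..T, Φ t)
    (ρ : ℝ → ℝ) (hρpos : ∀ t, 0 ≤ t → 0 < ρ t)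
    (hode : ∀ t, 0 ≤ t →
      HasDerivAt ρ (μ * ρ t * (Φ t * (Real.tanh (ρ t) / ρ t) - σt)) t) :
    ¬ Tendsto ρ atTop (nhds 0) := by
  intro hcontra
  set I : ℝ := ∫ t in (0:ℝ)..T, Φ t with hIdef
  have hI : σt * T < I := by
    have := mul_lt_mul_of_pos_right hmean hT
    calc σt * T < (1 / T) * I * T := this
    _ = I := by field_simp
  have hIpos : 0 < I := lt_trans (by positivity) hI
  set c : ℝ := (σt * T + I) / (2 * I) with hcdef
  have hc1 : c < 1 := by
    rw [hcdef, div_lt_one (by positivity)]; linarith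
  have hc0 : 0 < c := by positivity
  have hcI : σt * T < c * I := by
    rw [hcdef, div_mul_eq_mul_div, mul_comm (2:ℝ) I, ← div_div,
      mul_div_assoc, div_self hIpos.ne', mul_one]
    linarith
  -- choose ε > 0 such that tanh x / x > c for 0 < x < ε
  have hev : ∀ᶠ x in nhdsWithin 0 {(0:ℝ)}ᶜ, c < Real.tanh x / x :=
    tendsto_tanh_div.eventually (eventually_gt_nhds hc1)
  obtain ⟨ε, hε, hsub⟩ := Metric.mem_nhdsWithin_iff.mp hev
  have hball : ∀ x : ℝ, dist x 0 < ε → x ≠ 0 → c < Real.tanh x / x :=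
    fun x h1 h2 => hsub ⟨Metric.mem_ball.mpr h1, h2⟩
  -- choose t₀ beyond which 0 ≤ t and ρ t < ε
  have hev2 : ∀ᶠ t in atTop, ρ t < ε := hcontra.eventually (eventually_lt_nhds hε)
  obtain ⟨t₀, ht₀⟩ := (hev2.and (eventually_ge_atTop (0:ℝ))).exists_forall_of_atTop
  have ht₀0 : (0:ℝ) ≤ t₀ := (ht₀ t₀ le_rfl).2
  -- key lower bound on tanh(ρ t)/ρ t
  have hkey : ∀ t, t₀ ≤ t → c ≤ Real.tanh (ρ t) / ρ t := by
    intro t ht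
    have hρ := hρpos t (le_trans ht₀0 ht)
    have hρε := (ht₀ t ht).1
    refine le_of_lt (hball _ ?_ hρ.ne')
    rw [Real.dist_eq, sub_zero, abs_of_pos hρ]; exact hρε
  -- the auxiliary periodic function g
  set g : ℝ → ℝ := fun s => μ * (c * Φ s - σt) with hgdef
  have hgc : Continuous g := by continuity
  have hgper : Function.Periodic g T := by
    intro x; simp [hgdef, hΦper x]
  have h_int : ∀ t₁ t₂, IntervalIntegrable g MeasureTheory.volume t₁ t₂ :=
    fun t₁ t₂ => hgc.intervalIntegrable t₁ t₂
  have hgint : (∫ x in (0:ℝ)..T, g x) = μ * (c * I - σt * T) := by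
    simp only [hgdef]
    rw [intervalIntegral.integral_const_mul]
    rw [intervalIntegral.integral_sub ((hΦc.intervalIntegrable 0 T).const_mul c)
      intervalIntegrable_const]
    rw [intervalIntegral.integral_const_mul, intervalIntegral.integral_const]
    simp [hIdef, smul_eq_mul, mul_comm]
  have hgintpos : 0 < ∫ x in (0:ℝ)..T, g x := by
    rw [hgint]
    have h4 : 0 < c * I - σt * T := by linarith
    positivity
  have hF0 : Tendsto (fun t => ∫ x in (0:ℝ)..t, g x) atTop atTop :=
    hgper.tendsto_atTop_intervalIntegral_of_pos hgintpos hT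
  -- H := log ∘ ρ − primitive of g is monotone on [t₀, ∞)
  set H : ℝ → ℝ := fun t => Real.log (ρ t) - ∫ x in (0:ℝ)..t, g x with hHdef
  have hHderiv : ∀ t, t₀ ≤ t →
      HasDerivAt H (μ * (Φ t * (Real.tanh (ρ t) / ρ t) - σt) - g t) t := by
    intro t ht
    have ht0 : (0:ℝ) ≤ t := le_trans ht₀0 ht
    have hρ := hρpos t ht0
    have h1 : HasDerivAt (fun t => Real.log (ρ t))
        ((ρ t)⁻¹ * (μ * ρ t * (Φ t * (Real.tanh (ρ t) / ρ t) - σt))) t :=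
      (Real.hasDerivAt_log hρ.ne').comp t (hode t ht0)
    have h2 : HasDerivAt (fun t => ∫ x in (0:ℝ)..t, g x) (g t) t :=
      (hgc.integral_hasStrictDerivAt 0 t).hasDerivAt
    have h3 := h1.sub h2
    convert h3 using 1
    · rfl
    · rfl
    · rfl
    rw [mul_comm μ (ρ t), mul_assoc (ρ t), inv_mul_cancel_left₀ hρ.ne']
  have hmono : MonotoneOn H (Set.Ici t₀) := by
    apply monotoneOn_of_hasDerivWithinAt_nonneg (convex_Ici t₀)
      (f' := fun t => μ * (Φ t * (Real.tanh (ρ t) / ρ t) - σt) - g t)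
    · intro t ht
      exact ((hHderiv t ht).continuousAt).continuousWithinAt
    · intro t ht
      rw [interior_Ici] at ht
      exact ((hHderiv t (le_of_lt ht)).hasDerivWithinAt)
    · intro t ht
      rw [interior_Ici] at ht
      have hkey' := hkey t (le_of_lt ht)
      have hΦt := hΦpos t
      have : μ * (Φ t * (Real.tanh (ρ t) / ρ t) - σt) - g t
          = μ * Φ t * (Real.tanh (ρ t) / ρ t - c) := by
        simp only [hgdef]; ring
      rw [this]
      have : 0 ≤ Real.tanh (ρ t) / ρ t - c := by linarith
      positivity
  -- so log (ρ t) ≥ (H t₀) + ∫₀ᵗ g → ∞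
  have hlog : Tendsto (fun t => Real.log (ρ t)) atTop atTop := by
    refine tendsto_atTop_mono' atTop (f₁ := fun t => H t₀ + ∫ x in (0:ℝ)..t, g x) ?_ ?_
    · filter_upwards [eventually_ge_atTop t₀] with t ht
      have := hmono (Set.self_mem_Ici) (Set.mem_Ici.mpr ht) ht
      simp only [hHdef] at this ⊢
      linarith
    · exact tendsto_atTop_add_const_left _ _ hF0
  -- contradiction: ρ → 0 so eventually log ρ < 0, but log ρ → ∞
  have h1 : ∀ᶠ t in atTop, 1 < Real.log (ρ t) := hlog.eventually_gt_atTop 1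
  have h2 : ∀ᶠ t in atTop, ρ t < 1 := hcontra.eventually (eventually_lt_nhds one_pos)
  have h3 : ∀ᶠ t in atTop, (0:ℝ) ≤ t := eventually_ge_atTop 0
  obtain ⟨t, ha, hb, hc⟩ := (h1.and (h2.and h3)).exists
  have := Real.log_neg (hρpos t hc) hb
  linarith
end

section
/- Suppose σ̃ < Φ̄. Let x₂ be the unique positive root of tanh(x)/x = σ̃/Φ* and let x̄ = ((tanh/id)⁻¹(σ̃/Φ̄))·e^{−μ(Φ*−σ̃)T}. Then x̄ < x₂, and the time-T solution map F(ρ₀) = ρ(T; ρ₀) of the ODE ρ' = μρ[Φ(t)·tanh(ρ)/ρ − σ̃] maps the interval [x̄, x₂] into itself. -/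
/-!
Since `tanh x / x` is strictly decreasing on `(0, ∞)` and `Φbar ≤ Φstar`, we get `xbar' ≤ x₂`,
and whenever `ρ > x₂` the right-hand side of the equation is nonpositive, so `ρ` cannot cross
`x₂` upwards.

For the lower bound let `s` be the last time in `[0, T]` with `ρ s ≥ xbar'` (or `s = 0` if there
is none). On `(s, T]` we have `ρ < xbar'`, hence `tanh ρ / ρ ≥ σ / Φbar`, so `ρ` grows at least
at the relative rate `μ (σ Φ / Φbar - σ)`. This rate has integral zero over `[0, T]`, so its
integral over `[s, T]` equals `μ σ (s - (1 / Φbar) ∫₀ˢ Φ) ≥ -μ (Φstar - σ) s`. If `s = 0` this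
gives `ρ T ≥ ρ 0`; otherwise `ρ T ≥ xbar' exp (-μ (Φstar - σ) s)`.
-/

open Real Set intervalIntegral

theorem Real.tanh_pos {x : ℝ} (hx : 0 < x) : 0 < tanh x := by
  rw [tanh_eq_sinh_div_cosh]
  exact div_pos (sinh_pos_iff.2 hx) (cosh_pos x)

theorem Real.strictAntiOn_tanh_div_self : StrictAntiOn (fun x => tanh x / x) (Ioi 0) := by
  have heq : (fun x => tanh x / x) = fun x => sinh x / (x * cosh x) := by
    funext x
    rw [tanh_eq_sinh_div_cosh, div_div, mul_comm]
  have hderiv : ∀ x, x ≠ 0 → HasDerivAt (fun x => sinh x / (x * cosh x))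
      ((cosh x * (x * cosh x) - sinh x * (1 * cosh x + x * sinh x)) / (x * cosh x) ^ 2) x :=
    fun x hx => (hasDerivAt_sinh x).div ((hasDerivAt_id x).mul (hasDerivAt_cosh x))
      (mul_ne_zero hx (cosh_pos x).ne')
  rw [heq]
  refine strictAntiOn_of_hasDerivWithinAt_neg (convex_Ioi 0)
    (fun x hx => (hderiv x (ne_of_gt hx)).continuousAt.continuousWithinAt)
    (fun x hx => (hderiv x (ne_of_gt (interior_subset hx : x ∈ Ioi 0))).hasDerivWithinAt)
    fun x hx => ?_
  rw [interior_Ioi] at hx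
  have hx : 0 < x := hx
  have hnum : cosh x * (x * cosh x) - sinh x * (1 * cosh x + x * sinh x)
      = x - sinh x * cosh x := by
    linear_combination x * cosh_sq_sub_sinh_sq x
  rw [hnum]
  refine div_neg_of_neg_of_pos (sub_neg.2 ?_) (by positivity)
  calc x < sinh x := self_lt_sinh_iff.2 hx
    _ ≤ sinh x * cosh x := le_mul_of_one_le_right (sinh_pos_iff.2 hx).le (one_le_cosh x)

theorem ContinuousOn.exists_last_ge {f : ℝ → ℝ} {a b : ℝ} (hab : a ≤ b)
    (hf : ContinuousOn f (Icc a b)) (c : ℝ) :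
    ∃ s ∈ Icc a b, (s = a ∨ c ≤ f s) ∧ ∀ t ∈ Ioc s b, f t < c := by
  have hK : IsCompact ({a} ∪ Icc a b ∩ f ⁻¹' Ici c) :=
    isCompact_singleton.union <| isCompact_Icc.of_isClosed_subset
      (hf.preimage_isClosed_of_isClosed isClosed_Icc isClosed_Ici) inter_subset_left
  obtain ⟨s, hsK, hs_max⟩ := hK.exists_isGreatest ⟨a, Or.inl rfl⟩
  have has : a ≤ s := hs_max (Or.inl rfl)
  refine ⟨s, ?_, hsK.imp id And.right, fun t ht => not_le.1 fun hct => ?_⟩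
  · rcases hsK with rfl | hsK
    exacts [⟨le_rfl, hab⟩, hsK.1]
  · exact ht.1.not_ge (hs_max (Or.inr ⟨⟨has.trans ht.1.le, ht.2⟩, hct⟩))

theorem image_le_of_deriv_nonpos_above {f f' : ℝ → ℝ} {a b c : ℝ} (hab : a ≤ b)
    (hf : ∀ t ∈ Icc a b, HasDerivAt f (f' t) t) (ha : f a ≤ c)
    (hf' : ∀ t ∈ Ioo a b, c < f t → f' t ≤ 0) : f b ≤ c := by
  have hcont : ContinuousOn f (Icc a b) := fun t ht => (hf t ht).continuousAt.continuousWithinAt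
  obtain ⟨s, hs, hs_last, hs_after⟩ := hcont.neg.exists_last_ge hab (-c)
  have hfs : f s ≤ c := by
    rcases hs_last with rfl | hs_last
    exacts [ha, neg_le_neg_iff.1 hs_last]
  have hsub : Icc s b ⊆ Icc a b := Icc_subset_Icc_left hs.1
  have hanti : AntitoneOn f (Icc s b) := by
    refine antitoneOn_of_hasDerivWithinAt_nonpos (convex_Icc s b) (hcont.mono hsub)
      (fun t ht => (hf t (hsub (interior_subset ht))).hasDerivWithinAt) fun t ht => ?_
    rw [interior_Icc] at ht
    exact hf' t ⟨hs.1.trans_lt ht.1, ht.2⟩ (neg_lt_neg_iff.1 (hs_after t (Ioo_subset_Ioc_self ht)))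
  exact (hanti (left_mem_Icc.2 hs.2) (right_mem_Icc.2 hs.2) hs.2).trans hfs

theorem mul_exp_integral_le_of_mul_le_deriv {f f' g : ℝ → ℝ} {a b : ℝ} (hab : a ≤ b)
    (hg : Continuous g) (hf : ∀ t ∈ Icc a b, HasDerivAt f (f' t) t)
    (hle : ∀ t ∈ Ioo a b, g t * f t ≤ f' t) :
    f a * exp (∫ t in a..b, g t) ≤ f b := by
  set G : ℝ → ℝ := fun t => ∫ u in a..t, g u with hG
  have hk : ∀ t ∈ Icc a b, HasDerivAt (fun t => f t * exp (-G t))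
      ((f' t - g t * f t) * exp (-G t)) t := by
    intro t ht
    exact ((hf t ht).mul (hg.integral_hasStrictDerivAt a t).hasDerivAt.neg.exp).congr_deriv
      (by simp only [Pi.neg_apply, hG]; ring)
  have hmono : MonotoneOn (fun t => f t * exp (-G t)) (Icc a b) := by
    refine monotoneOn_of_hasDerivWithinAt_nonneg (convex_Icc a b)
      (fun t ht => (hk t ht).continuousAt.continuousWithinAt)
      (fun t ht => (hk t (interior_subset ht)).hasDerivWithinAt) fun t ht => ?_
    rw [interior_Icc] at ht
    exact mul_nonneg (sub_nonneg.2 (hle t ht)) (exp_pos _).le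
  have hab' : f a ≤ f b * exp (-G b) := by
    simpa [hG] using hmono (left_mem_Icc.2 hab) (right_mem_Icc.2 hab) hab
  calc f a * exp (G b) ≤ f b * exp (-G b) * exp (G b) := by gcongr
    _ = f b := by rw [mul_assoc, ← exp_add, neg_add_cancel, exp_zero, mul_one]

theorem integral_le_mul_of_forall_le {f : ℝ → ℝ} {a b M : ℝ} (hab : a ≤ b)
    (hf : IntervalIntegrable f MeasureTheory.volume a b) (h : ∀ t ∈ Icc a b, f t ≤ M) :
    ∫ t in a..b, f t ≤ (b - a) * M := by
  simpa using integral_mono_on hab hf intervalIntegrable_const h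

theorem integral_comparison_rate_ge {μ σ T Φbar Φstar s : ℝ} {Φ : ℝ → ℝ} (hμ : 0 ≤ μ)
    (hσ : 0 < σ) (hσΦbar : σ ≤ Φbar) (hσΦstar : σ ≤ Φstar) (hΦc : Continuous Φ)
    (hs : s ∈ Icc 0 T) (hΦle : ∀ t ∈ Icc 0 T, Φ t ≤ Φstar)
    (hΦint : ∫ t in (0 : ℝ)..T, Φ t = T * Φbar) :
    -μ * (Φstar - σ) * s ≤ ∫ t in s..T, μ * (σ / Φbar * Φ t - σ) := by
  have hΦbar : 0 < Φbar := hσ.trans_le hσΦbar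
  have hhead : ∫ t in (0 : ℝ)..s, Φ t ≤ s * Φstar := by
    simpa using integral_le_mul_of_forall_le hs.1 (hΦc.intervalIntegrable 0 s)
      fun t ht => hΦle t ⟨ht.1, ht.2.trans hs.2⟩
  have htail : ∫ t in s..T, Φ t = T * Φbar - ∫ t in (0 : ℝ)..s, Φ t := by
    rw [← hΦint, integral_interval_sub_left (hΦc.intervalIntegrable 0 T)
      (hΦc.intervalIntegrable 0 s)]
  have heval : ∫ t in s..T, μ * (σ / Φbar * Φ t - σ)
      = μ * (σ * s - σ / Φbar * ∫ t in (0 : ℝ)..s, Φ t) := by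
    rw [integral_const_mul, integral_sub ((hΦc.intervalIntegrable s T).const_mul _)
      intervalIntegrable_const, integral_const_mul, htail, integral_const, smul_eq_mul]
    field_simp
    ring
  have hbound : σ / Φbar * ∫ t in (0 : ℝ)..s, Φ t ≤ s * Φstar :=
    calc σ / Φbar * ∫ t in (0 : ℝ)..s, Φ t ≤ σ / Φbar * (s * Φstar) := by gcongr
      _ ≤ s * Φstar := mul_le_of_le_one_left (mul_nonneg hs.1 (hσ.le.trans hσΦstar))
        ((div_le_one hΦbar).2 hσΦbar)
  rw [heval]
  calc -μ * (Φstar - σ) * s = μ * (σ * s - s * Φstar) := by ring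
    _ ≤ μ * (σ * s - σ / Φbar * ∫ t in (0 : ℝ)..s, Φ t) :=
      mul_le_mul_of_nonneg_left (by linarith) hμ

theorem le_solution_of_tanh_div_eq {μ σ T Φbar Φstar xbar' : ℝ} {Φ ρ : ℝ → ℝ} (hμ : 0 ≤ μ)
    (hσ : 0 < σ) (hσΦbar : σ ≤ Φbar) (hσΦstar : σ ≤ Φstar) (hT : 0 ≤ T) (hΦc : Continuous Φ)
    (hΦnonneg : ∀ t ∈ Icc 0 T, 0 ≤ Φ t) (hΦle : ∀ t ∈ Icc 0 T, Φ t ≤ Φstar)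
    (hΦint : ∫ t in (0 : ℝ)..T, Φ t = T * Φbar)
    (hxbar'pos : 0 < xbar') (hxbar' : tanh xbar' / xbar' = σ / Φbar)
    (hρpos : ∀ t ∈ Icc 0 T, 0 < ρ t)
    (hρ : ∀ t ∈ Icc 0 T, HasDerivAt ρ (μ * ρ t * (Φ t * (tanh (ρ t) / ρ t) - σ)) t)
    (h0 : xbar' * exp (-μ * (Φstar - σ) * T) ≤ ρ 0) :
    xbar' * exp (-μ * (Φstar - σ) * T) ≤ ρ T := by
  obtain ⟨s, hs, hs_last, hs_after⟩ := ContinuousOn.exists_last_ge hT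
    (fun t ht => (hρ t ht).continuousAt.continuousWithinAt) xbar'
  have hsub : Icc s T ⊆ Icc 0 T := Icc_subset_Icc_left hs.1
  have hrate : ∀ t ∈ Ioo s T, μ * (σ / Φbar * Φ t - σ) * ρ t
      ≤ μ * ρ t * (Φ t * (tanh (ρ t) / ρ t) - σ) := by
    intro t ht
    have ht' : t ∈ Icc 0 T := hsub (Ioo_subset_Icc_self ht)
    have hq : σ / Φbar ≤ tanh (ρ t) / ρ t := hxbar' ▸
      strictAntiOn_tanh_div_self.antitoneOn (hρpos t ht') hxbar'pos (hs_after t ⟨ht.1, ht.2.le⟩).le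
    have hgap : 0 ≤ μ * ρ t * (Φ t * (tanh (ρ t) / ρ t - σ / Φbar)) :=
      mul_nonneg (mul_nonneg hμ (hρpos t ht').le) (mul_nonneg (hΦnonneg t ht') (sub_nonneg.2 hq))
    linear_combination hgap
  have hρs : ρ s * exp (-μ * (Φstar - σ) * s) ≤ ρ T :=
    (mul_le_mul_of_nonneg_left (exp_le_exp.2 (integral_comparison_rate_ge hμ hσ hσΦbar
      hσΦstar hΦc hs hΦle hΦint)) (hρpos s hs).le).trans
      (mul_exp_integral_le_of_mul_le_deriv hs.2 (by fun_prop) (fun t ht => hρ t (hsub ht)) hrate)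
  rcases hs_last with rfl | hs_last
  · exact h0.trans (by simpa using hρs)
  · calc xbar' * exp (-μ * (Φstar - σ) * T) ≤ xbar' * exp (-μ * (Φstar - σ) * s) :=
          mul_le_mul_of_nonneg_left (exp_le_exp.2 (mul_le_mul_of_nonpos_left hs.2
            (mul_nonpos_of_nonpos_of_nonneg (neg_nonpos.2 hμ) (sub_nonneg.2 hσΦstar))))
            hxbar'pos.le
      _ ≤ ρ s * exp (-μ * (Φstar - σ) * s) := by gcongr
      _ ≤ ρ T := hρs

theorem solution_le_of_tanh_div_eq {μ σ T M x₂ : ℝ} {Φ ρ : ℝ → ℝ} (hμ : 0 ≤ μ) (hT : 0 ≤ T)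
    (hM : 0 < M) (hΦle : ∀ t ∈ Icc 0 T, Φ t ≤ M) (hx₂pos : 0 < x₂)
    (hx₂ : tanh x₂ / x₂ = σ / M)
    (hρ : ∀ t ∈ Icc 0 T, HasDerivAt ρ (μ * ρ t * (Φ t * (tanh (ρ t) / ρ t) - σ)) t)
    (h0 : ρ 0 ≤ x₂) : ρ T ≤ x₂ := by
  refine image_le_of_deriv_nonpos_above hT hρ h0 fun t ht hgt => ?_
  have hρt : 0 < ρ t := hx₂pos.trans hgt
  have hq : tanh (ρ t) / ρ t < σ / M := hx₂ ▸ strictAntiOn_tanh_div_self hx₂pos hρt hgt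
  have hΦq : Φ t * (tanh (ρ t) / ρ t) ≤ σ :=
    calc Φ t * (tanh (ρ t) / ρ t) ≤ M * (tanh (ρ t) / ρ t) :=
          mul_le_mul_of_nonneg_right (hΦle t (Ioo_subset_Icc_self ht))
            (div_pos (tanh_pos hρt) hρt).le
      _ ≤ M * (σ / M) := by gcongr
      _ = σ := mul_div_cancel₀ σ hM.ne'
  exact mul_nonpos_of_nonneg_of_nonpos (mul_nonneg hμ hρt.le) (sub_nonpos.2 hΦq)

theorem time_T_map_invariant_interval_general (μ σt T Φbar Φstar x₂ xbar' : ℝ)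
    (hμ : 0 < μ) (hσt : 0 < σt) (hT : 0 < T)
    (Φ : ℝ → ℝ) (hΦc : Continuous Φ) (hΦpos : ∀ t, 0 < Φ t)
    (hΦbar : Φbar = (1 / T) * ∫ t in (0:ℝ)..T, Φ t)
    (hΦstar : IsGreatest (Φ '' Set.Icc 0 T) Φstar)
    (hmean : σt < Φbar)
    (hx₂pos : 0 < x₂) (hx₂ : Real.tanh x₂ / x₂ = σt / Φstar)
    (hxbar'pos : 0 < xbar') (hxbar' : Real.tanh xbar' / xbar' = σt / Φbar) :
    xbar' * Real.exp (-μ * (Φstar - σt) * T) < x₂ ∧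
    ∀ ρ : ℝ → ℝ,
      (∀ t, 0 ≤ t → 0 < ρ t) →
      (∀ t, 0 ≤ t →
        HasDerivAt ρ (μ * ρ t * (Φ t * (Real.tanh (ρ t) / ρ t) - σt)) t) →
      ρ 0 ∈ Set.Icc (xbar' * Real.exp (-μ * (Φstar - σt) * T)) x₂ →
      ρ T ∈ Set.Icc (xbar' * Real.exp (-μ * (Φstar - σt) * T)) x₂ := by
  have hΦle : ∀ t ∈ Icc 0 T, Φ t ≤ Φstar := fun t ht => hΦstar.2 ⟨t, ht, rfl⟩
  have hΦint : ∫ t in (0 : ℝ)..T, Φ t = T * Φbar := by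
    rw [hΦbar]
    field_simp
  have hΦbar_le : Φbar ≤ Φstar := le_of_mul_le_mul_left (by
    simpa [hΦint] using integral_le_mul_of_forall_le hT.le (hΦc.intervalIntegrable 0 T) hΦle) hT
  have hσΦstar : σt < Φstar := hmean.trans_le hΦbar_le
  have hxbar'_le : xbar' ≤ x₂ := not_lt.1 fun hlt => by
    have := strictAntiOn_tanh_div_self hx₂pos (hx₂pos.trans hlt) hlt
    dsimp only at this
    rw [hx₂, hxbar'] at this
    exact (div_le_div_of_nonneg_left hσt.le (hσt.trans hmean) hΦbar_le).not_gt this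
  have hdecay : exp (-μ * (Φstar - σt) * T) < 1 :=
    exp_lt_one_iff.2 (by nlinarith [mul_pos hμ (sub_pos.2 hσΦstar)])
  refine ⟨(mul_lt_of_lt_one_right hxbar'pos hdecay).trans_le hxbar'_le,
    fun ρ hρpos hρ hρ0 => ⟨?_, ?_⟩⟩
  · exact le_solution_of_tanh_div_eq hμ.le hσt hmean.le hσΦstar.le hT.le hΦc
      (fun t _ => (hΦpos t).le) hΦle hΦint hxbar'pos hxbar' (fun t ht => hρpos t ht.1)
      (fun t ht => hρ t ht.1) hρ0.1
  · exact solution_le_of_tanh_div_eq hμ.le hT.le (hσt.trans hσΦstar) hΦle hx₂pos hx₂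
      (fun t ht => hρ t ht.1) hρ0.2

theorem time_T_map_invariant_interval (μ σt T Φbar Φstar x₂ xbar' : ℝ)
    (hμ : 0 < μ) (hσt : 0 < σt) (hT : 0 < T)
    (Φ : ℝ → ℝ) (hΦc : Continuous Φ) (hΦpos : ∀ t, 0 < Φ t)
    (hΦper : Function.Periodic Φ T)
    (hΦbar : Φbar = (1 / T) * ∫ t in (0:ℝ)..T, Φ t)
    (hΦstar : IsGreatest (Φ '' Set.Icc 0 T) Φstar)
    (hmean : σt < Φbar)
    (hx₂pos : 0 < x₂) (hx₂ : Real.tanh x₂ / x₂ = σt / Φstar)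
    (hxbar'pos : 0 < xbar') (hxbar' : Real.tanh xbar' / xbar' = σt / Φbar) :
    xbar' * Real.exp (-μ * (Φstar - σt) * T) < x₂ ∧
    ∀ ρ : ℝ → ℝ,
      (∀ t, 0 ≤ t → 0 < ρ t) →
      (∀ t, 0 ≤ t →
        HasDerivAt ρ (μ * ρ t * (Φ t * (Real.tanh (ρ t) / ρ t) - σt)) t) →
      ρ 0 ∈ Set.Icc (xbar' * Real.exp (-μ * (Φstar - σt) * T)) x₂ →
      ρ T ∈ Set.Icc (xbar' * Real.exp (-μ * (Φstar - σt) * T)) x₂ :=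
  time_T_map_invariant_interval_general μ σt T Φbar Φstar x₂ xbar' hμ hσt hT Φ hΦc hΦpos hΦbar
    hΦstar hmean hx₂pos hx₂ hxbar'pos hxbar'
end

section
/- Suppose σ̃ < Φ̄ and let ρ* be a positive T-periodic solution of ρ' = μρ[Φ(t)·tanh(ρ)/ρ − σ̃]. Then for any positive solution ρ, there exist constants δ > 0 and C > 0 such that |ρ(t) − ρ*(t)| ≤ C·e^{−δt} for all t > 0. -/
open Real

lemma myHasDerivAt_tanh (x : ℝ) : HasDerivAt Real.tanh (1 - Real.tanh x ^ 2) x := by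
  have h := (Real.hasDerivAt_sinh x).div (Real.hasDerivAt_cosh x) (Real.cosh_pos x).ne'
  have he : Real.tanh = fun x => Real.sinh x / Real.cosh x := by
    funext z; exact Real.tanh_eq_sinh_div_cosh z
  rw [he]
  refine h.congr_deriv ?_
  have h1 := Real.cosh_sq_sub_sinh_sq x
  have h2 := (Real.cosh_pos x).ne'
  field_simp

lemma my_tanh_pos {x : ℝ} (hx : 0 < x) : 0 < Real.tanh x := by
  rw [Real.tanh_eq_sinh_div_cosh]
  exact div_pos (Real.sinh_pos_iff.2 hx) (Real.cosh_pos x)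

lemma my_tanh_lt_one (x : ℝ) : Real.tanh x < 1 := by
  rw [Real.tanh_eq_sinh_div_cosh]
  rw [div_lt_one (Real.cosh_pos x)]
  nlinarith [Real.cosh_sq_sub_sinh_sq x, Real.cosh_pos x, sq_nonneg (Real.sinh x - Real.cosh x)]

lemma my_key_ineq {x : ℝ} (hx : 0 < x) : (1 - Real.tanh x ^ 2) * x < Real.tanh x := by
  set φ : ℝ → ℝ := fun z => Real.tanh z - z * (1 - Real.tanh z ^ 2) with hφ
  have hder : ∀ z : ℝ, HasDerivAt φ (2 * z * Real.tanh z * (1 - Real.tanh z ^ 2)) z := by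
    intro z
    have h1 : HasDerivAt (fun w : ℝ => Real.tanh w ^ 2)
        (2 * Real.tanh z ^ 1 * (1 - Real.tanh z ^ 2)) z := (myHasDerivAt_tanh z).pow 2
    have h2 : HasDerivAt (fun w : ℝ => 1 - Real.tanh w ^ 2)
        (0 - 2 * Real.tanh z ^ 1 * (1 - Real.tanh z ^ 2)) z := (hasDerivAt_const z 1).sub h1
    have h3 := (hasDerivAt_id z).mul h2
    have h4 := (myHasDerivAt_tanh z).sub h3
    refine h4.congr_deriv ?_
    simp only [id_eq]
    ring
  have hmono : StrictMonoOn φ (Set.Ici (0:ℝ)) := by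
    apply strictMonoOn_of_deriv_pos (convex_Ici 0)
    · exact fun z _ => (hder z).continuousAt.continuousWithinAt
    · intro z hz
      rw [interior_Ici] at hz
      rw [(hder z).deriv]
      have ht1 : 0 < Real.tanh z := my_tanh_pos hz
      have ht2 : Real.tanh z < 1 := my_tanh_lt_one z
      have hz' : (0:ℝ) < z := hz
      have h2 : (0:ℝ) < 1 - Real.tanh z ^ 2 := by nlinarith
      exact mul_pos (mul_pos (mul_pos two_pos hz') ht1) h2
  have h0 : φ 0 = 0 := by simp [hφ]
  have := hmono (Set.self_mem_Ici) (Set.mem_Ici.2 hx.le) hx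
  rw [h0] at this
  simp only [hφ] at this
  linarith

lemma my_continuous_tanh : Continuous Real.tanh :=
  continuous_iff_continuousAt.2 fun x => (myHasDerivAt_tanh x).continuousAt

lemma my_g_deriv {x : ℝ} (hx : x ≠ 0) :
    HasDerivAt (fun z => Real.tanh z / z)
      (((1 - Real.tanh x ^ 2) * x - Real.tanh x * 1) / x ^ 2) x :=
  (myHasDerivAt_tanh x).div (hasDerivAt_id x) hx

/-- quantitative strict antitonicity of `tanh x / x` on `[m, M]`. -/
lemma my_g_quant {m M : ℝ} (hm : 0 < m) (hmM : m ≤ M) :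
    ∃ c > 0, ∀ a ∈ Set.Icc m M, ∀ b ∈ Set.Icc m M, b ≤ a →
      c * (a - b) ≤ Real.tanh b / b - Real.tanh a / a := by
  set ψ : ℝ → ℝ := fun x => (Real.tanh x - (1 - Real.tanh x ^ 2) * x) / x ^ 2 with hψ
  have hψc : ContinuousOn ψ (Set.Icc m M) := by
    apply ContinuousOn.div
    · apply ContinuousOn.sub
      · exact my_continuous_tanh.continuousOn
      · exact ((continuous_const.sub (my_continuous_tanh.pow 2)).mul continuous_id).continuousOn
    · fun_prop
    · intro x hx
      have : 0 < x := lt_of_lt_of_le hm hx.1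
      positivity
  obtain ⟨x₀, hx₀, hmin⟩ := isCompact_Icc.exists_isMinOn (Set.nonempty_Icc.2 hmM) hψc
  have hx₀pos : 0 < x₀ := lt_of_lt_of_le hm hx₀.1
  have hc : 0 < ψ x₀ := by
    have := my_key_ineq hx₀pos
    have hx2 : 0 < x₀ ^ 2 := by positivity
    apply div_pos (by linarith) hx2
  refine ⟨ψ x₀, hc, ?_⟩
  intro a ha b hb hba
  -- h := g + c * id is antitone on Icc m M
  set c := ψ x₀
  have hanti : AntitoneOn (fun x => Real.tanh x / x + c * x) (Set.Icc m M) := by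
    apply antitoneOn_of_deriv_nonpos (convex_Icc m M)
    · apply ContinuousOn.add
      · apply ContinuousOn.div my_continuous_tanh.continuousOn continuousOn_id
        intro x hx; exact (lt_of_lt_of_le hm hx.1).ne'
      · fun_prop
    · intro x hx
      rw [interior_Icc] at hx
      have hxpos : 0 < x := lt_of_lt_of_le hm hx.1.le
      have hid : HasDerivAt (fun y : ℝ => c * y) c x := by
        simpa using (hasDerivAt_id x).const_mul c
      exact ((my_g_deriv hxpos.ne').add hid).differentiableAt.differentiableWithinAt
    · intro x hx
      rw [interior_Icc] at hx
      have hxpos : 0 < x := lt_of_lt_of_le hm hx.1.le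
      have hid : HasDerivAt (fun y : ℝ => c * y) c x := by
        simpa using (hasDerivAt_id x).const_mul c
      have hd : HasDerivAt (fun x => Real.tanh x / x + c * x) _ x := (my_g_deriv hxpos.ne').add hid
      rw [hd.deriv]
      have hle : c ≤ ψ x := hmin ⟨hx.1.le, hx.2.le⟩
      have hx2 : 0 < x ^ 2 := by positivity
      simp only [hψ] at hle
      have hnum : (1 - Real.tanh x ^ 2) * x - Real.tanh x * 1
          = -(Real.tanh x - (1 - Real.tanh x ^ 2) * x) := by ring
      rw [hnum, neg_div]
      linarith
  have := hanti hb ha hba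
  simp only at this
  linarith

/-- `a - b ≤ M * (log a - log b)` for `0 < b ≤ a ≤ M`. -/
lemma my_log_lb {m M a b : ℝ} (hm : 0 < m) (hb : b ∈ Set.Icc m M) (ha : a ∈ Set.Icc m M)
    (hba : b ≤ a) : a - b ≤ M * (Real.log a - Real.log b) := by
  have hbpos : 0 < b := lt_of_lt_of_le hm hb.1
  have hapos : 0 < a := lt_of_lt_of_le hm ha.1
  have h1 : Real.log (b / a) ≤ b / a - 1 := Real.log_le_sub_one_of_pos (by positivity)
  rw [Real.log_div hbpos.ne' hapos.ne'] at h1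
  have h2 : 1 - b / a ≤ Real.log a - Real.log b := by linarith
  have h3 : (a - b) / a = 1 - b / a := by field_simp
  have h4 : (a - b) / a ≤ Real.log a - Real.log b := by rw [h3]; exact h2
  have hMpos : 0 < M := lt_of_lt_of_le hapos ha.2
  calc a - b = a * ((a - b)/a) := by field_simp
    _ ≤ M * ((a-b)/a) := by
        apply mul_le_mul_of_nonneg_right ha.2
        exact div_nonneg (by linarith) hapos.le
    _ ≤ M * (Real.log a - Real.log b) := mul_le_mul_of_nonneg_left h4 hMpos.le

/-- `log a - log b ≤ (a - b)/m` for `0 < m ≤ b ≤ a`. -/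
lemma my_log_ub {m a b : ℝ} (hm : 0 < m) (hmb : m ≤ b) (hba : b ≤ a) :
    m * (Real.log a - Real.log b) ≤ a - b := by
  have hbpos : 0 < b := lt_of_lt_of_le hm hmb
  have hapos : 0 < a := lt_of_lt_of_le hbpos hba
  have h1 : Real.log (a / b) ≤ a / b - 1 := Real.log_le_sub_one_of_pos (by positivity)
  rw [Real.log_div hapos.ne' hbpos.ne'] at h1
  have h2 : a / b - 1 = (a - b) / b := by field_simp
  rw [h2] at h1
  have h3 : (a - b)/b ≤ (a - b)/m := by
    apply div_le_div_of_nonneg_left (by linarith) hm hmb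
  have h4 : Real.log a - Real.log b ≤ (a - b)/m := le_trans h1 h3
  calc m * (Real.log a - Real.log b) ≤ m * ((a-b)/m) := mul_le_mul_of_nonneg_left h4 hm.le
    _ = a - b := by field_simp

set_option maxHeartbeats 1600000 in
theorem exponential_stability_periodic_solution (μ σt T : ℝ)
    (hμ : 0 < μ) (hσt : 0 < σt) (hT : 0 < T)
    (Φ : ℝ → ℝ) (hΦc : Continuous Φ) (hΦpos : ∀ t, 0 < Φ t)
    (hΦper : Function.Periodic Φ T)
    (hmean : σt < (1 / T) * ∫ t in (0:ℝ)..T, Φ t)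
    (ρstar : ℝ → ℝ) (hρstarpos : ∀ t, 0 < ρstar t)
    (hρstarode : ∀ t,
      HasDerivAt ρstar (μ * ρstar t * (Φ t * (Real.tanh (ρstar t) / ρstar t) - σt)) t)
    (hρstarper : ∀ t, ρstar (t + T) = ρstar t)
    (ρ : ℝ → ℝ) (hρpos : ∀ t, 0 ≤ t → 0 < ρ t)
    (hode : ∀ t, 0 ≤ t →
      HasDerivAt ρ (μ * ρ t * (Φ t * (Real.tanh (ρ t) / ρ t) - σt)) t) :
    ∃ δ > 0, ∃ C > 0, ∀ t, 0 < t → |ρ t - ρstar t| ≤ C * Real.exp (-δ * t) := by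
  have hρstarcont : Continuous ρstar :=
    continuous_iff_continuousAt.2 fun t => (hρstarode t).continuousAt
  have hper : Function.Periodic ρstar T := hρstarper
  obtain ⟨ta, hta, hminρ⟩ :=
    isCompact_Icc.exists_isMinOn (Set.nonempty_Icc.2 hT.le) hρstarcont.continuousOn
  obtain ⟨tb, htb, hmaxρ⟩ :=
    isCompact_Icc.exists_isMaxOn (Set.nonempty_Icc.2 hT.le) hρstarcont.continuousOn
  obtain ⟨tc, htc, hminΦ⟩ :=
    isCompact_Icc.exists_isMinOn (Set.nonempty_Icc.2 hT.le) hΦc.continuousOn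
  set mstar := ρstar ta with hmstar
  set Mstar := ρstar tb with hMstar
  set Φmin := Φ tc with hΦmindef
  have hmstarpos : 0 < mstar := hρstarpos ta
  have hΦminpos : 0 < Φmin := hΦpos tc
  have hρstar_lb : ∀ t, mstar ≤ ρstar t := by
    intro t
    obtain ⟨u, hu, heq⟩ := hper.exists_mem_Ico₀ hT t
    rw [heq]; exact hminρ ⟨hu.1, hu.2.le⟩
  have hρstar_ub : ∀ t, ρstar t ≤ Mstar := by
    intro t
    obtain ⟨u, hu, heq⟩ := hper.exists_mem_Ico₀ hT t
    rw [heq]; exact hmaxρ ⟨hu.1, hu.2.le⟩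
  have hΦ_lb : ∀ t, Φmin ≤ Φ t := by
    intro t
    obtain ⟨u, hu, heq⟩ := hΦper.exists_mem_Ico₀ hT t
    rw [heq]; exact hminΦ ⟨hu.1, hu.2.le⟩
  set y : ℝ → ℝ := fun t => Real.log (ρ t) - Real.log (ρstar t) with hy
  have hyder : ∀ t, 0 ≤ t → HasDerivAt y
      (μ * Φ t * (Real.tanh (ρ t) / ρ t - Real.tanh (ρstar t) / ρstar t)) t := by
    intro t ht
    have h1 := (hode t ht).log (hρpos t ht).ne'
    have h2 := (hρstarode t).log (hρstarpos t).ne'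
    have h3 := h1.sub h2
    refine h3.congr_deriv ?_
    have hρne := (hρpos t ht).ne'
    have hρsne := (hρstarpos t).ne'
    field_simp
    ring
  have gmono : ∀ a b : ℝ, 0 < b → b ≤ a → Real.tanh a / a ≤ Real.tanh b / b := by
    intro a b hb hba
    obtain ⟨c, hc, hcq⟩ := my_g_quant hb hba
    have h := hcq a ⟨hba, le_rfl⟩ b ⟨le_rfl, hba⟩ hba
    nlinarith [mul_nonneg hc.le (sub_nonneg.2 hba)]
  have hsign : ∀ t, 0 ≤ t →
      y t * (Real.tanh (ρ t) / ρ t - Real.tanh (ρstar t) / ρstar t) ≤ 0 := by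
    intro t ht
    rcases le_total (ρ t) (ρstar t) with h | h
    · have h1 : y t ≤ 0 := by
        simp only [hy]
        have := (Real.log_le_log_iff (hρpos t ht) (hρstarpos t)).2 h
        linarith
      have h2 : 0 ≤ Real.tanh (ρ t) / ρ t - Real.tanh (ρstar t) / ρstar t :=
        sub_nonneg.2 (gmono _ _ (hρpos t ht) h)
      exact mul_nonpos_of_nonpos_of_nonneg h1 h2
    · have h1 : 0 ≤ y t := by
        simp only [hy]
        have := (Real.log_le_log_iff (hρstarpos t) (hρpos t ht)).2 h
        linarith
      have h2 : Real.tanh (ρ t) / ρ t - Real.tanh (ρstar t) / ρstar t ≤ 0 :=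
        sub_nonpos.2 (gmono _ _ (hρstarpos t) h)
      exact mul_nonpos_of_nonneg_of_nonpos h1 h2
  set q : ℝ → ℝ := fun t => y t ^ 2 with hq
  have hqder : ∀ t, 0 ≤ t → HasDerivAt q
      (2 * y t ^ 1 * (μ * Φ t * (Real.tanh (ρ t) / ρ t - Real.tanh (ρstar t) / ρstar t))) t := by
    intro t ht
    exact (hyder t ht).pow 2
  have hqanti : AntitoneOn q (Set.Ici (0:ℝ)) := by
    apply antitoneOn_of_deriv_nonpos (convex_Ici 0)
    · exact fun t ht => (hqder t ht).continuousAt.continuousWithinAt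
    · intro x hx
      rw [interior_Ici] at hx
      exact (hqder x (le_of_lt hx)).differentiableAt.differentiableWithinAt
    · intro x hx
      rw [interior_Ici] at hx
      rw [(hqder x (le_of_lt hx)).deriv]
      have hs := hsign x (le_of_lt hx)
      have h0 : (0:ℝ) ≤ 2 * μ * Φ x := by nlinarith [hΦpos x]
      nlinarith [mul_nonpos_of_nonneg_of_nonpos h0 hs]
  set Y := |y 0| with hY
  have hYnonneg : 0 ≤ Y := abs_nonneg _
  have habs : ∀ t, 0 ≤ t → |y t| ≤ Y := by
    intro t ht
    have h := hqanti Set.self_mem_Ici (Set.mem_Ici.2 ht) ht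
    simp only [hq] at h
    nlinarith [sq_abs (y t), sq_abs (y 0), abs_nonneg (y t), abs_nonneg (y 0)]
  have hexpeq : ∀ t, 0 ≤ t → ρ t = ρstar t * Real.exp (y t) := by
    intro t ht
    simp only [hy]
    rw [Real.exp_sub, Real.exp_log (hρpos t ht), Real.exp_log (hρstarpos t)]
    rw [mul_comm, div_mul_cancel₀ _ (hρstarpos t).ne']
  set m := mstar * Real.exp (-Y) with hm
  set M := Mstar * Real.exp Y with hM
  have hmpos : 0 < m := mul_pos hmstarpos (Real.exp_pos _)
  have hMstarpos : 0 < Mstar := lt_of_lt_of_le hmstarpos (hρstar_lb tb)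
  have hMpos : 0 < M := mul_pos hMstarpos (Real.exp_pos _)
  have hρ_mem : ∀ t, 0 ≤ t → ρ t ∈ Set.Icc m M := by
    intro t ht
    have hab := abs_le.1 (habs t ht)
    constructor
    · rw [hexpeq t ht]
      apply mul_le_mul (hρstar_lb t) (Real.exp_le_exp.2 (by linarith)) (Real.exp_pos _).le
        (hρstarpos t).le
    · rw [hexpeq t ht]
      apply mul_le_mul (hρstar_ub t) (Real.exp_le_exp.2 (by linarith)) (Real.exp_pos _).le
      linarith [hρstar_lb tb, hmstarpos]
  have hρstar_mem : ∀ t, ρstar t ∈ Set.Icc m M := by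
    intro t
    have he1 : Real.exp (-Y) ≤ 1 := Real.exp_le_one_iff.2 (by linarith)
    have he2 : (1:ℝ) ≤ Real.exp Y := Real.one_le_exp_iff.2 hYnonneg
    constructor
    · have : m ≤ mstar := by nlinarith
      linarith [hρstar_lb t]
    · have hMs : Mstar ≤ M := by nlinarith [hρstar_lb tb, hmstarpos]
      linarith [hρstar_ub t]
  have hmM : m ≤ M := le_trans (hρstar_mem 0).1 (hρstar_mem 0).2
  obtain ⟨c, hcpos, hcq⟩ := my_g_quant hmpos hmM
  set δ := μ * Φmin * (c * m) with hδ
  have hδpos : 0 < δ := mul_pos (mul_pos hμ hΦminpos) (mul_pos hcpos hmpos)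
  have hprod : ∀ t, 0 ≤ t →
      y t * (Real.tanh (ρ t) / ρ t - Real.tanh (ρstar t) / ρstar t) ≤ -(c * m) * y t ^ 2 := by
    intro t ht
    have ha := hρ_mem t ht
    have hb := hρstar_mem t
    rcases le_total (ρstar t) (ρ t) with h | h
    · have h1 := my_log_ub hmpos hb.1 h
      have h2 := hcq (ρ t) ha (ρstar t) hb h
      have hu : 0 ≤ y t := by
        simp only [hy]
        have := (Real.log_le_log_iff (hρstarpos t) (hρpos t ht)).2 h
        linarith
      have hyt : y t = Real.log (ρ t) - Real.log (ρstar t) := rfl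
      rw [hyt] at hu ⊢
      nlinarith [mul_le_mul_of_nonneg_left h2 hu,
        mul_le_mul_of_nonneg_left h1 (mul_nonneg hcpos.le hu)]
    · have h1 := my_log_ub hmpos ha.1 h
      have h2 := hcq (ρstar t) hb (ρ t) ha h
      have hu : y t ≤ 0 := by
        simp only [hy]
        have := (Real.log_le_log_iff (hρpos t ht) (hρstarpos t)).2 h
        linarith
      have hyt : y t = Real.log (ρ t) - Real.log (ρstar t) := rfl
      rw [hyt] at hu ⊢
      have hv : 0 ≤ Real.log (ρstar t) - Real.log (ρ t) := by linarith
      nlinarith [mul_le_mul_of_nonneg_left h2 hv,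
        mul_le_mul_of_nonneg_left h1 (mul_nonneg hcpos.le hv)]
  have hkey : ∀ t, 0 ≤ t →
      2 * y t ^ 1 * (μ * Φ t * (Real.tanh (ρ t) / ρ t - Real.tanh (ρstar t) / ρstar t))
        + 2 * δ * y t ^ 2 ≤ 0 := by
    intro t ht
    set Δ := Real.tanh (ρ t) / ρ t - Real.tanh (ρstar t) / ρstar t with hΔ
    have w := hprod t ht
    have e1 : 2 * μ * Φ t * (y t * Δ) ≤ 2 * μ * Φ t * (-(c * m) * y t ^ 2) :=
      mul_le_mul_of_nonneg_left w (by nlinarith [hΦpos t])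
    have e2 : 2 * μ * Φ t * (-(c * m) * y t ^ 2) ≤ 2 * μ * Φmin * (-(c * m) * y t ^ 2) := by
      apply mul_le_mul_of_nonpos_right _ _
      · nlinarith [hΦ_lb t, mul_le_mul_of_nonneg_left (hΦ_lb t) hμ.le]
      · nlinarith [sq_nonneg (y t), mul_pos hcpos hmpos]
    have e0 : 2 * y t ^ 1 * (μ * Φ t * Δ) = 2 * μ * Φ t * (y t * Δ) := by ring
    have e3 : 2 * μ * Φmin * (-(c * m) * y t ^ 2) = -(2 * δ * y t ^ 2) := by
      rw [hδ]; ring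
    rw [e0]
    linarith
  set E : ℝ → ℝ := fun t => y t ^ 2 * Real.exp (2 * δ * t) with hE
  have hEder : ∀ t, 0 ≤ t → HasDerivAt E
      (2 * y t ^ 1 * (μ * Φ t * (Real.tanh (ρ t) / ρ t - Real.tanh (ρstar t) / ρstar t))
        * Real.exp (2 * δ * t) + y t ^ 2 * (Real.exp (2 * δ * t) * (2 * δ))) t := by
    intro t ht
    have hlin : HasDerivAt (fun s : ℝ => 2 * δ * s) (2 * δ) t := by
      simpa using (hasDerivAt_id t).const_mul (2 * δ)
    exact (hqder t ht).mul hlin.exp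
  have hEanti : AntitoneOn E (Set.Ici (0:ℝ)) := by
    apply antitoneOn_of_deriv_nonpos (convex_Ici 0)
    · exact fun t ht => (hEder t ht).continuousAt.continuousWithinAt
    · intro x hx
      rw [interior_Ici] at hx
      exact (hEder x (le_of_lt hx)).differentiableAt.differentiableWithinAt
    · intro x hx
      rw [interior_Ici] at hx
      rw [(hEder x (le_of_lt hx)).deriv]
      have hk := hkey x (le_of_lt hx)
      have he := Real.exp_pos (2 * δ * x)
      nlinarith [mul_nonpos_of_nonneg_of_nonpos he.le hk]
  have hdecay : ∀ t, 0 ≤ t → |y t| ≤ Y * Real.exp (-δ * t) := by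
    intro t ht
    have h := hEanti Set.self_mem_Ici (Set.mem_Ici.2 ht) ht
    simp only [hE] at h
    rw [mul_zero, Real.exp_zero, mul_one] at h
    have hfact : Real.exp (2 * δ * t) * (Real.exp (-δ * t) * Real.exp (-δ * t)) = 1 := by
      rw [← Real.exp_add, ← Real.exp_add]
      have : 2 * δ * t + (-δ * t + -δ * t) = 0 := by ring
      rw [this, Real.exp_zero]
    have hepos := Real.exp_pos (-δ * t)
    have hy2 : y 0 ^ 2 = Y ^ 2 := (sq_abs (y 0)).symm
    rw [hy2] at h
    have h3 := mul_le_mul_of_nonneg_right h (mul_pos hepos hepos).le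
    have h4 : y t ^ 2 ≤ (Y * Real.exp (-δ * t)) ^ 2 := by
      nlinarith [h3, hfact, sq_nonneg (y t)]
    calc |y t| = Real.sqrt (y t ^ 2) := (Real.sqrt_sq_eq_abs _).symm
      _ ≤ Real.sqrt ((Y * Real.exp (-δ * t)) ^ 2) := Real.sqrt_le_sqrt h4
      _ = Y * Real.exp (-δ * t) := Real.sqrt_sq (mul_nonneg hYnonneg hepos.le)
  refine ⟨δ, hδpos, M * Y + 1, by nlinarith, ?_⟩
  intro t ht
  have ht' := ht.le
  have ha := hρ_mem t ht'
  have hb := hρstar_mem t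
  have h1 : |ρ t - ρstar t| ≤ M * |y t| := by
    have hyt : y t = Real.log (ρ t) - Real.log (ρstar t) := rfl
    rcases le_total (ρstar t) (ρ t) with h | h
    · have hl := my_log_lb hmpos hb ha h
      rw [abs_of_nonneg (by linarith)]
      calc ρ t - ρstar t ≤ M * (Real.log (ρ t) - Real.log (ρstar t)) := hl
        _ = M * y t := by rw [hyt]
        _ ≤ M * |y t| := mul_le_mul_of_nonneg_left (le_abs_self _) hMpos.le
    · have hl := my_log_lb hmpos ha hb h
      rw [abs_of_nonpos (by linarith)]
      calc -(ρ t - ρstar t) = ρstar t - ρ t := by ring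
        _ ≤ M * (Real.log (ρstar t) - Real.log (ρ t)) := hl
        _ = M * (-(y t)) := by rw [hyt]; ring
        _ ≤ M * |y t| := mul_le_mul_of_nonneg_left (neg_le_abs _) hMpos.le
  have h2 := hdecay t ht'
  have hepos := Real.exp_pos (-δ * t)
  calc |ρ t - ρstar t| ≤ M * |y t| := h1
    _ ≤ M * (Y * Real.exp (-δ * t)) := mul_le_mul_of_nonneg_left h2 hMpos.le
    _ ≤ (M * Y + 1) * Real.exp (-δ * t) := by nlinarith
end

section
/- If σ̃ < Φ̄, then the positive T-periodic solution of ρ' = μρ[Φ(t)·tanh(ρ)/ρ − σ̃] is unique: if ρ*¹ and ρ*² are both positive T-periodic solutions, then ρ*¹ = ρ*². -/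
open Real Set

/-- `tanh x / x` is strictly antitone on `(0, ∞)`. -/
lemma tanh_div_strictAntiOn : StrictAntiOn (fun x => Real.tanh x / x) (Set.Ioi (0:ℝ)) := by
  have hderiv : ∀ x : ℝ, 0 < x →
      HasDerivAt (fun x => Real.tanh x / x)
        ((1 / Real.cosh x ^ 2 * x - Real.tanh x * 1) / x ^ 2) x := by
    intro x hx
    have htanh : HasDerivAt Real.tanh (1 / Real.cosh x ^ 2) x := by
      have h : HasDerivAt (fun y => Real.sinh y / Real.cosh y) _ x := (Real.hasDerivAt_sinh x).div (Real.hasDerivAt_cosh x)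
        (ne_of_gt (Real.cosh_pos x))
      have : (fun y => Real.sinh y / Real.cosh y) = Real.tanh := by
        funext y; rw [Real.tanh_eq_sinh_div_cosh]
      rw [this] at h
      convert h using 1
      have := Real.cosh_sq_sub_sinh_sq x
      field_simp
      nlinarith [this]
    exact htanh.div (hasDerivAt_id x) (ne_of_gt hx)
  apply strictAntiOn_of_deriv_neg (convex_Ioi 0)
  · have hcont : Continuous Real.tanh := by
      have : Real.tanh = fun x => Real.sinh x / Real.cosh x := by
        funext y; rw [Real.tanh_eq_sinh_div_cosh]
      rw [this]
      exact Real.continuous_sinh.div Real.continuous_cosh fun x => ne_of_gt (Real.cosh_pos x)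
    exact ContinuousOn.div hcont.continuousOn continuousOn_id
      fun x hx => ne_of_gt (mem_Ioi.mp hx)
  · intro x hx
    rw [interior_Ioi, mem_Ioi] at hx
    rw [(hderiv x hx).deriv]
    have hcosh := Real.cosh_pos x
    have h1 : x < Real.sinh x * Real.cosh x := by
      have := Real.self_lt_sinh_iff.mpr hx
      nlinarith [Real.one_le_cosh x, Real.sinh_pos_iff.mpr hx]
    have hnum : 1 / Real.cosh x ^ 2 * x - Real.tanh x * 1 < 0 := by
      rw [Real.tanh_eq_sinh_div_cosh]
      rw [div_mul_eq_mul_div, sub_neg, mul_one, div_lt_div_iff₀ (by positivity) hcosh]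
      nlinarith
    exact div_neg_of_neg_of_pos hnum (by positivity)

theorem uniqueness_positive_periodic_solution (μ σt T : ℝ)
    (hμ : 0 < μ) (hσt : 0 < σt) (hT : 0 < T)
    (Φ : ℝ → ℝ) (hΦc : Continuous Φ) (hΦpos : ∀ t, 0 < Φ t)
    (hΦper : Function.Periodic Φ T)
    (hmean : σt < (1 / T) * ∫ t in (0:ℝ)..T, Φ t)
    (ρ₁ ρ₂ : ℝ → ℝ)
    (hρ₁pos : ∀ t, 0 < ρ₁ t) (hρ₂pos : ∀ t, 0 < ρ₂ t)
    (hρ₁ode : ∀ t,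
      HasDerivAt ρ₁ (μ * ρ₁ t * (Φ t * (Real.tanh (ρ₁ t) / ρ₁ t) - σt)) t)
    (hρ₂ode : ∀ t,
      HasDerivAt ρ₂ (μ * ρ₂ t * (Φ t * (Real.tanh (ρ₂ t) / ρ₂ t) - σt)) t)
    (hρ₁per : ∀ t, ρ₁ (t + T) = ρ₁ t)
    (hρ₂per : ∀ t, ρ₂ (t + T) = ρ₂ t) :
    ∀ t, ρ₁ t = ρ₂ t := by
  -- Main step: under the same hypotheses, ρ₁ ≤ ρ₂; applied symmetrically.
  suffices key : ∀ (a b : ℝ → ℝ), (∀ t, 0 < a t) → (∀ t, 0 < b t) →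
      (∀ t, HasDerivAt a (μ * a t * (Φ t * (Real.tanh (a t) / a t) - σt)) t) →
      (∀ t, HasDerivAt b (μ * b t * (Φ t * (Real.tanh (b t) / b t) - σt)) t) →
      (∀ t, a (t + T) = a t) → (∀ t, b (t + T) = b t) →
      ∀ t, a t ≤ b t by
    intro t
    exact le_antisymm (key ρ₁ ρ₂ hρ₁pos hρ₂pos hρ₁ode hρ₂ode hρ₁per hρ₂per t)
      (key ρ₂ ρ₁ hρ₂pos hρ₁pos hρ₂ode hρ₁ode hρ₂per hρ₁per t)
  intro a b hapos hbpos haode hbode haper hbper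
  set g : ℝ → ℝ := fun t => Real.log (a t) - Real.log (b t) with hg
  have hgderiv : ∀ t, HasDerivAt g
      (μ * Φ t * (Real.tanh (a t) / a t - Real.tanh (b t) / b t)) t := by
    intro t
    have h1 := (haode t).log (ne_of_gt (hapos t))
    have h2 := (hbode t).log (ne_of_gt (hbpos t))
    have : HasDerivAt (fun y => Real.log (a y) - Real.log (b y)) _ t := h1.sub h2
    convert this using 1
    have ha := ne_of_gt (hapos t)
    have hb := ne_of_gt (hbpos t)
    field_simp
    ring
  have hgcont : Continuous g :=
    continuous_iff_continuousAt.mpr fun t => ((hgderiv t).differentiableAt.continuousAt)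
  have hgper : Function.Periodic g T := by
    intro t; simp [hg, haper t, hbper t]
  -- g attains a global maximum at some t₀ ∈ [0, T]
  obtain ⟨t₀, ht₀mem, ht₀max⟩ := isCompact_Icc.exists_isMaxOn (nonempty_Icc.mpr hT.le)
    (hgcont.continuousOn (s := Icc 0 T))
  have hglobal : ∀ t, g t ≤ g t₀ := by
    intro t
    obtain ⟨s, hs, hgs⟩ := hgper.exists_mem_Ico₀ hT t
    rw [hgs]
    exact ht₀max (Ico_subset_Icc_self hs)
  -- derivative of g at t₀ is zero
  have hderiv0 : μ * Φ t₀ * (Real.tanh (a t₀) / a t₀ - Real.tanh (b t₀) / b t₀) = 0 := by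
    have hmax : IsLocalMax g t₀ := Filter.Eventually.of_forall hglobal
    exact hmax.hasDerivAt_eq_zero (hgderiv t₀)
  have heq : Real.tanh (a t₀) / a t₀ = Real.tanh (b t₀) / b t₀ := by
    have hne : μ * Φ t₀ ≠ 0 := ne_of_gt (mul_pos hμ (hΦpos t₀))
    have := mul_eq_zero.mp hderiv0
    rcases this with h | h
    · exact absurd h hne
    · linarith [sub_eq_zero.mp h]
  have hab : a t₀ = b t₀ :=
    tanh_div_strictAntiOn.injOn (mem_Ioi.mpr (hapos t₀)) (mem_Ioi.mpr (hbpos t₀)) heq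
  -- hence g t₀ = 0, so g ≤ 0 everywhere
  have hg0 : g t₀ = 0 := by simp [hg, hab]
  intro t
  have := hglobal t
  rw [hg0] at this
  have hlog : Real.log (a t) ≤ Real.log (b t) := by simp [hg] at this; linarith
  exact (Real.log_le_log_iff (hapos t) (hbpos t)).mp hlog
end
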